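/- arXiv:2510.07756 — 2 statements merged into one kernel-verified Lean document; each statement's English description precedes it below -/
import Mathlib

section
/- Optimal coupled MLMF variance (Theorem 3, coupled case): with the optimal coefficients a_l* = ρ_{l,L} σ_L / σ_l, the MLMF estimator Y* = P_L^{(N_L)} + Σ_{l=1}^{L−1} a_l* (P_l^{(N_l)} − P_l^{(N_{l+1})}) satisfies Var(Y*) = σ_L² Σ_{l=1}^{L} (ρ_{l,L}² − ρ_{l−1,L}²)/N_l. -/
open MeasureTheory ProbabilityTheory Finset

/-- Sample mean of the first `n` samples of the sequence `X`. -/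
noncomputable def sampleMean {Ω : Type} (n : ℕ) (X : ℕ → Ω → ℝ) : Ω → ℝ :=
  fun ω => (n : ℝ)⁻¹ * ∑ j ∈ Finset.range n, X j ω

/-- Covariance of two real random variables. -/
noncomputable def covar {Ω : Type} [MeasurableSpace Ω] (μ : Measure Ω) (X Y : Ω → ℝ) : ℝ :=
  ∫ ω, (X ω - μ[X]) * (Y ω - μ[Y]) ∂μ

/-!
For i.i.d. samples, `Cov(P_l^{(n)}, P_k^{(m)}) = Cov(Z[l], Z[k]) / max(n, m)`: only the
`min(n, m)` shared samples are correlated. With nested sample counts this makes the coupled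
corrections `P_l^{(N_l)} - P_l^{(N_{l+1})}` pairwise uncorrelated, so the variance of the estimator
only involves their variances and their covariances with `P_L^{(N_L)}`. With the optimal
coefficients, level `l` then contributes `ρ_l² σ_L² (1/N_l - 1/N_{l+1})`, and summation by parts
turns the total into the stated form.
-/

lemma sum_range_sum_range_ite_eq {R : Type*} [Semiring R] (n m : ℕ) (c : R) :
    ∑ i ∈ range n, ∑ j ∈ range m, (if i = j then c else 0) = min n m * c := by
  simp_rw [sum_ite_eq, sum_ite_mem, range_inter_range, sum_const, card_range, nsmul_eq_mul]

lemma ProbabilityTheory.IdentDistrib.covariance_comp_eq {α Ω Ω' : Type*} [MeasurableSpace α]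
    [MeasurableSpace Ω] [MeasurableSpace Ω'] {μ : Measure Ω} {ν : Measure Ω'} {U : Ω → α}
    {V : Ω' → α} (h : IdentDistrib U V μ ν)
    {f g : α → ℝ} (hf : Measurable f) (hg : Measurable g) :
    cov[f ∘ U, g ∘ U; μ] = cov[f ∘ V, g ∘ V; ν] := by
  rw [← covariance_map hf.aestronglyMeasurable hg.aestronglyMeasurable h.aemeasurable_fst,
    h.map_eq, covariance_map hf.aestronglyMeasurable hg.aestronglyMeasurable h.aemeasurable_snd]

section SampleMean

variable {Ω : Type} [MeasurableSpace Ω] {μ : Measure Ω}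

lemma memLp_sampleMean {p : ENNReal} {X : ℕ → Ω → ℝ} (hX : ∀ j, MemLp (X j) p μ)
    (n : ℕ) : MemLp (sampleMean n X) p μ :=
  (memLp_finsetSum _ fun j _ => hX j).const_mul _

lemma covariance_sampleMean [IsFiniteMeasure μ] {X Y : ℕ → Ω → ℝ} {c : ℝ}
    (hX : ∀ j, MemLp (X j) 2 μ) (hY : ∀ j, MemLp (Y j) 2 μ)
    (hXY : ∀ i j, cov[X i, Y j; μ] = if i = j then c else 0)
    {n m : ℕ} (hn : n ≠ 0) (hm : m ≠ 0) :
    cov[sampleMean n X, sampleMean m Y; μ] = c / max n m := by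
  unfold sampleMean
  rw [covariance_const_mul_left, covariance_const_mul_right,
    covariance_fun_sum_fun_sum' (fun i _ => hX i) (fun j _ => hY j)]
  simp_rw [hXY, sum_range_sum_range_ite_eq]
  have hmax : ((max n m : ℕ) : ℝ) ≠ 0 := by positivity
  rw [eq_div_iff hmax]
  field_simp
  rw [mul_right_comm, ← Nat.cast_mul, min_mul_max, Nat.cast_mul]

lemma covariance_coord_of_iid {ι : Type*} {Z : ℕ → Ω → ι → ℝ} (hindep : iIndepFun Z μ)
    (hident : ∀ j, IdentDistrib (Z j) (Z 0) μ μ) {l k : ι}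
    (hl : ∀ j, MemLp (fun ω => Z j ω l) 2 μ) (hk : ∀ j, MemLp (fun ω => Z j ω k) 2 μ)
    (i j : ℕ) :
    cov[fun ω => Z i ω l, fun ω => Z j ω k; μ]
      = if i = j then cov[fun ω => Z 0 ω l, fun ω => Z 0 ω k; μ] else 0 := by
  split_ifs with hij
  · subst hij
    exact (hident i).covariance_comp_eq (measurable_pi_apply l) (measurable_pi_apply k)
  · exact ((hindep.indepFun hij).comp (measurable_pi_apply l)
      (measurable_pi_apply k)).covariance_eq_zero (hl i) (hk j)

end SampleMean

section Nested

variable {Ω : Type} [MeasurableSpace Ω] {μ : Measure Ω} [IsFiniteMeasure μ]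
  {X Y : ℕ → Ω → ℝ} {c : ℝ}

lemma covariance_sub_sub_eq_zero_of_le (hX : ∀ n, MemLp (X n) 2 μ)
    (hY : ∀ m, MemLp (Y m) 2 μ)
    (hXY : ∀ n m, n ≠ 0 → m ≠ 0 → cov[X n, Y m; μ] = c / max n m)
    {n₁ n₂ m₁ m₂ : ℕ} (hm₁ : m₁ ≠ 0) (hm₂ : m₂ ≠ 0) (h₁ : m₁ ≤ n₂) (h₂ : m₂ ≤ n₂)
    (hn : n₂ ≤ n₁) :
    cov[fun ω => X n₁ ω - X n₂ ω, fun ω => Y m₁ ω - Y m₂ ω; μ] = 0 := by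
  have hn₂ : n₂ ≠ 0 := by omega
  rw [covariance_fun_sub_fun_sub (hX _) (hX _) (hY _) (hY _), hXY _ _ (by omega) hm₁,
    hXY _ _ (by omega) hm₂, hXY _ _ hn₂ hm₁, hXY _ _ hn₂ hm₂, max_eq_left (h₁.trans hn),
    max_eq_left (h₂.trans hn), max_eq_left h₁, max_eq_left h₂]
  ring

lemma covariance_sub_right_of_le (hX : ∀ n, MemLp (X n) 2 μ) (hY : ∀ m, MemLp (Y m) 2 μ)
    (hXY : ∀ n m, n ≠ 0 → m ≠ 0 → cov[X n, Y m; μ] = c / max n m)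
    {n m₁ m₂ : ℕ} (hn : n ≠ 0) (h₁ : n ≤ m₂) (h₂ : m₂ ≤ m₁) :
    cov[X n, fun ω => Y m₁ ω - Y m₂ ω; μ] = c * ((m₁ : ℝ)⁻¹ - (m₂ : ℝ)⁻¹) := by
  rw [covariance_fun_sub_right (hX _) (hY _) (hY _), hXY _ _ hn (by omega),
    hXY _ _ hn (by omega), max_eq_right (h₁.trans h₂), max_eq_right h₁]
  ring

lemma variance_sub_of_le (hX : ∀ n, MemLp (X n) 2 μ)
    (hXX : ∀ n m, n ≠ 0 → m ≠ 0 → cov[X n, X m; μ] = c / max n m)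
    {n₁ n₂ : ℕ} (hn₂ : n₂ ≠ 0) (hn : n₂ ≤ n₁) :
    Var[fun ω => X n₁ ω - X n₂ ω; μ] = c * ((n₂ : ℝ)⁻¹ - (n₁ : ℝ)⁻¹) := by
  have hn₁ : n₁ ≠ 0 := by omega
  rw [variance_fun_sub (hX _) (hX _), ← covariance_self (hX _).aemeasurable,
    ← covariance_self (hX _).aemeasurable, hXX _ _ hn₁ hn₁, hXX _ _ hn₁ hn₂,
    hXX _ _ hn₂ hn₂, max_eq_left hn, max_self, max_self]
  ring

end Nested

section Coupled

-- `P l n` stands for `P_l^{(n)}`, the level-`l` mean over the first `n` samples.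
variable {Ω : Type} [MeasurableSpace Ω] {μ : Measure Ω} [IsFiniteMeasure μ]
  {P : ℕ → ℕ → Ω → ℝ} {C : ℕ → ℕ → ℝ} {L : ℕ} {N : ℕ → ℕ}

lemma ne_zero_of_antitoneOn (hN : AntitoneOn N (Set.Icc 1 L)) (hNL : N L ≠ 0) {l : ℕ}
    (hl : l ∈ Set.Icc 1 L) : N l ≠ 0 := by
  have := hN hl ⟨hl.1.trans hl.2, le_rfl⟩ hl.2
  omega

lemma covariance_coupled_diff_eq_zero (hN : AntitoneOn N (Set.Icc 1 L)) (hNL : N L ≠ 0)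
    (hP : ∀ l ∈ Icc 1 L, ∀ n, MemLp (P l n) 2 μ)
    (hC : ∀ l ∈ Icc 1 L, ∀ k ∈ Icc 1 L, ∀ n m, n ≠ 0 → m ≠ 0 →
      cov[P l n, P k m; μ] = C l k / max n m)
    {l k : ℕ} (hl : l ∈ Icc 1 (L - 1)) (hk : k ∈ Icc 1 (L - 1)) (hlk : l ≠ k) :
    cov[fun ω => P l (N l) ω - P l (N (l + 1)) ω,
      fun ω => P k (N k) ω - P k (N (k + 1)) ω; μ] = 0 := by
  wlog h : l < k generalizing l k
  · rw [covariance_comm]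
    exact this hk hl hlk.symm (by omega)
  exact covariance_sub_sub_eq_zero_of_le (hP l (by grind)) (hP k (by grind))
    (hC l (by grind) k (by grind)) (ne_zero_of_antitoneOn hN hNL (by grind))
    (ne_zero_of_antitoneOn hN hNL (by grind)) (hN (by grind) (by grind) (by omega))
    (hN (by grind) (by grind) (by omega)) (hN (by grind) (by grind) (by omega))

lemma variance_sum_coupled_diff (hN : AntitoneOn N (Set.Icc 1 L)) (hNL : N L ≠ 0)
    (hP : ∀ l ∈ Icc 1 L, ∀ n, MemLp (P l n) 2 μ)
    (hC : ∀ l ∈ Icc 1 L, ∀ k ∈ Icc 1 L, ∀ n m, n ≠ 0 → m ≠ 0 →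
      cov[P l n, P k m; μ] = C l k / max n m) (a : ℕ → ℝ) :
    Var[fun ω => ∑ l ∈ Icc 1 (L - 1), a l * (P l (N l) ω - P l (N (l + 1)) ω); μ]
      = ∑ l ∈ Icc 1 (L - 1), a l ^ 2 * C l l * ((N (l + 1) : ℝ)⁻¹ - (N l : ℝ)⁻¹) := by
  have hP' : ∀ l ∈ Icc 1 (L - 1), ∀ n, MemLp (P l n) 2 μ :=
    fun l hl => hP l (by grind)
  have hD : ∀ l ∈ Icc 1 (L - 1),
      MemLp (fun ω => a l * (P l (N l) ω - P l (N (l + 1)) ω)) 2 μ :=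
    fun l hl => (((hP' l hl) _).sub ((hP' l hl) _)).const_mul (a l)
  rw [variance_fun_sum' hD]
  refine sum_congr rfl fun l hl => ?_
  rw [sum_eq_single_of_mem l hl fun k hk hkl => by
      rw [covariance_const_mul_left, covariance_const_mul_right,
        covariance_coupled_diff_eq_zero hN hNL hP hC hl hk hkl.symm, mul_zero, mul_zero],
    covariance_const_mul_left, covariance_const_mul_right,
    covariance_self (X := fun ω => P l (N l) ω - P l (N (l + 1)) ω)
      (((hP' l hl) _).sub ((hP' l hl) _)).aemeasurable,
    variance_sub_of_le (hP' l hl) (hC l (by grind) l (by grind))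
      (ne_zero_of_antitoneOn hN hNL (by grind))
      (hN (by grind) (by grind) (by omega))]
  ring

theorem variance_coupled_estimator (hL : 1 ≤ L) (hN : AntitoneOn N (Set.Icc 1 L))
    (hNL : N L ≠ 0) (hP : ∀ l ∈ Icc 1 L, ∀ n, MemLp (P l n) 2 μ)
    (hC : ∀ l ∈ Icc 1 L, ∀ k ∈ Icc 1 L, ∀ n m, n ≠ 0 → m ≠ 0 →
      cov[P l n, P k m; μ] = C l k / max n m) (a : ℕ → ℝ) :
    Var[fun ω => P L (N L) ω
        + ∑ l ∈ Icc 1 (L - 1), a l * (P l (N l) ω - P l (N (l + 1)) ω); μ]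
      = C L L / N L + ∑ l ∈ Icc 1 (L - 1),
          (a l ^ 2 * C l l - 2 * a l * C L l) * ((N (l + 1) : ℝ)⁻¹ - (N l : ℝ)⁻¹) := by
  have hLL : L ∈ Icc 1 L := Finset.mem_Icc.2 ⟨hL, le_rfl⟩
  have hP' : ∀ l ∈ Icc 1 (L - 1), ∀ n, MemLp (P l n) 2 μ :=
    fun l hl => hP l (by grind)
  have hD : ∀ l ∈ Icc 1 (L - 1),
      MemLp (fun ω => a l * (P l (N l) ω - P l (N (l + 1)) ω)) 2 μ :=
    fun l hl => (((hP' l hl) _).sub ((hP' l hl) _)).const_mul (a l)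
  have hcross : cov[P L (N L),
      fun ω => ∑ l ∈ Icc 1 (L - 1), a l * (P l (N l) ω - P l (N (l + 1)) ω); μ]
      = ∑ l ∈ Icc 1 (L - 1), a l * C L l * ((N l : ℝ)⁻¹ - (N (l + 1) : ℝ)⁻¹) := by
    rw [covariance_fun_sum_right' hD (hP L hLL _)]
    refine sum_congr rfl fun l hl => ?_
    rw [covariance_const_mul_right, covariance_sub_right_of_le (hP L hLL) (hP' l hl)
      (hC L hLL l (by grind)) hNL (hN (by grind) (by grind) (by grind))
      (hN (by grind) (by grind) (by omega)), mul_assoc]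
  rw [variance_fun_add (hP L hLL _) (memLp_finsetSum _ hD),
    variance_sum_coupled_diff hN hNL hP hC, hcross,
    ← covariance_self (hP L hLL _).aemeasurable, hC L hLL L hLL _ _ hNL hNL, max_self,
    add_assoc, mul_sum, ← sum_add_distrib]
  congr 1
  exact sum_congr rfl fun l _ => by ring

end Coupled

lemma sum_Icc_sub_mul_eq_add_sum_mul_sub {R : Type*} [CommRing R] {f g : ℕ → R}
    (hf : f 0 = 0) (L : ℕ) :
    ∑ l ∈ Icc 1 L, (f l - f (l - 1)) * g l
      = f L * g L + ∑ l ∈ Icc 1 (L - 1), f l * (g l - g (l + 1)) := by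
  rcases L with _ | m
  · simp [hf]
  induction m with
  | zero => simp [hf]
  | succ m ih =>
    rw [sum_Icc_succ_top (by omega), ih, Nat.add_sub_cancel, Nat.add_sub_cancel,
      sum_Icc_succ_top (by omega)]
    ring

theorem stmt_8_general
    {Ω : Type} [MeasurableSpace Ω] (μ : Measure Ω) [IsProbabilityMeasure μ]
    (L : ℕ) (hL : 1 ≤ L)
    (Z : ℕ → Ω → ℕ → ℝ)
    (hindep : iIndepFun Z μ)
    (hident : ∀ j, IdentDistrib (Z j) (Z 0) μ μ)
    (hL2 : ∀ j, ∀ l ∈ Finset.Icc 1 L, MemLp (fun ω => Z j ω l) 2 μ)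
    (σ ρ : ℕ → ℝ)
    (hσ : ∀ l ∈ Finset.Icc 1 L, σ l = Real.sqrt (variance (fun ω => Z 0 ω l) μ))
    (hσpos : ∀ l ∈ Finset.Icc 1 L, 0 < σ l)
    (hρ : ∀ l ∈ Finset.Icc 1 L,
      ρ l = covar μ (fun ω => Z 0 ω l) (fun ω => Z 0 ω L) / (σ l * σ L))
    (hρ0 : ρ 0 = 0) (hρL : ρ L = 1)
    (N : ℕ → ℕ)
    (hNnest : ∀ l ∈ Finset.Icc 1 (L - 1), N (l + 1) ≤ N l)
    (hNLpos : 1 ≤ N L) :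
    variance (fun ω => sampleMean (N L) (fun j ω' => Z j ω' L) ω
        + ∑ l ∈ Finset.Icc 1 (L - 1),
            (ρ l * σ L / σ l) * (sampleMean (N l) (fun j ω' => Z j ω' l) ω
              - sampleMean (N (l + 1)) (fun j ω' => Z j ω' l) ω)) μ
      = (σ L) ^ 2 * ∑ l ∈ Finset.Icc 1 L, ((ρ l) ^ 2 - (ρ (l - 1)) ^ 2) / N l := by
  have hLL : L ∈ Icc 1 L := Finset.mem_Icc.2 ⟨hL, le_rfl⟩
  have hN : AntitoneOn N (Set.Icc 1 L) :=
    antitoneOn_of_add_one_le Set.ordConnected_Icc fun l _ hl hl' =>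
      hNnest l (Finset.mem_Icc.2 ⟨hl.1, by grind⟩)
  have hvar : ∀ l ∈ Icc 1 L, covar μ (fun ω => Z 0 ω l) (fun ω => Z 0 ω l) = σ l ^ 2 :=
    fun l hl => by
      rw [hσ l hl, Real.sq_sqrt (variance_nonneg _ _)]
      exact covariance_self (hL2 0 l hl).aemeasurable
  have hcov : ∀ l ∈ Icc 1 L,
      covar μ (fun ω => Z 0 ω L) (fun ω => Z 0 ω l) = ρ l * σ l * σ L := fun l hl => by
    rw [hρ l hl, mul_assoc, div_mul_cancel₀ _
      (mul_pos (hσpos l hl) (hσpos L hLL)).ne']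
    exact covariance_comm _ _
  rw [variance_coupled_estimator (P := fun l n => sampleMean n (fun j ω => Z j ω l))
      (C := fun l k => covar μ (fun ω => Z 0 ω l) (fun ω => Z 0 ω k)) hL hN (by omega)
      (fun l hl => memLp_sampleMean (hL2 · l hl))
      (fun l hl k hk _ _ hn hm => covariance_sampleMean (hL2 · l hl) (hL2 · k hk)
        (covariance_coord_of_iid hindep hident (hL2 · l hl) (hL2 · k hk)) hn hm),
    hvar L hLL]
  simp_rw [div_eq_mul_inv _ (N _ : ℝ)]
  rw [sum_Icc_sub_mul_eq_add_sum_mul_sub (f := fun l => ρ l ^ 2) (by simp [hρ0]), hρL,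
    mul_add, mul_sum]
  congr 1
  · ring
  refine sum_congr rfl fun l hl => ?_
  have hl' : l ∈ Icc 1 L := by grind
  rw [hvar l hl', hcov l hl']
  field_simp [(hσpos l hl').ne']
  ring

/-- Theorem 3, coupled case: with the optimal coefficients
`a_l* = ρ_{l,L} σ_L / σ_l`, the coupled MLMF estimator
`Y* = P_L^{(N_L)} + Σ_{l=1}^{L−1} a_l* (P_l^{(N_l)} − P_l^{(N_{l+1})})`
satisfies `Var(Y*) = σ_L² Σ_{l=1}^{L} (ρ_{l,L}² − ρ_{l−1,L}²)/N_l`,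
with the conventions `ρ_{0,L} = 0` and `ρ_{L,L} = 1`. -/
theorem stmt_8
    {Ω : Type} [MeasurableSpace Ω] (μ : Measure Ω) [IsProbabilityMeasure μ]
    (L : ℕ) (hL : 1 ≤ L)
    (Z : ℕ → Ω → ℕ → ℝ)
    (hmeas : ∀ j, Measurable (Z j))
    (hindep : iIndepFun Z μ)
    (hident : ∀ j, IdentDistrib (Z j) (Z 0) μ μ)
    (hL2 : ∀ j, ∀ l ∈ Finset.Icc 1 L, MemLp (fun ω => Z j ω l) 2 μ)
    (σ ρ : ℕ → ℝ)
    (hσ : ∀ l ∈ Finset.Icc 1 L, σ l = Real.sqrt (variance (fun ω => Z 0 ω l) μ))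
    (hσpos : ∀ l ∈ Finset.Icc 1 L, 0 < σ l)
    (hρ : ∀ l ∈ Finset.Icc 1 L,
      ρ l = covar μ (fun ω => Z 0 ω l) (fun ω => Z 0 ω L) / (σ l * σ L))
    (hρ0 : ρ 0 = 0) (hρL : ρ L = 1)
    (N : ℕ → ℕ)
    (hNnest : ∀ l ∈ Finset.Icc 1 (L - 1), N (l + 1) ≤ N l)
    (hNLpos : 1 ≤ N L) :
    variance (fun ω => sampleMean (N L) (fun j ω' => Z j ω' L) ω
        + ∑ l ∈ Finset.Icc 1 (L - 1),
            (ρ l * σ L / σ l) * (sampleMean (N l) (fun j ω' => Z j ω' l) ω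
              - sampleMean (N (l + 1)) (fun j ω' => Z j ω' l) ω)) μ
      = (σ L) ^ 2 * ∑ l ∈ Finset.Icc 1 L, ((ρ l) ^ 2 - (ρ (l - 1)) ^ 2) / N l :=
  stmt_8_general μ L hL Z hindep hident hL2 σ ρ hσ hσpos hρ hρ0 hρL N hNnest hNLpos
end

section
/- O(ε⁻²) sample complexity (Corollary to Theorem 4): for every ε > 0, set B(ε) = (Σ_{l=1}^{L} √(R_l C_l))² · ε⁻² and let N_l*(ε) = (B(ε) / Σ_{j=1}^{L} √(C_j R_j)) · √(R_l / C_l) be the optimal allocation for budget B(ε). Then Σ_{l=1}^{L} N_l*(ε) C_l = B(ε) and Σ_{l=1}^{L} R_l / N_l*(ε) = ε²; in particular, the computational budget needed to achieve estimator variance ε² under optimal allocation is proportional to ε⁻². -/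
open Finset

/-!
With `S = ∑ √(R_l C_l)`, the allocation `N_l = (B / S) √(R_l / C_l)` satisfies
`N_l C_l = (B / S) √(R_l C_l)` and `R_l / N_l = (S / B) √(R_l C_l)`. Summing, the total cost is
`B` and the variance is `S² / B`, which equals `ε²` exactly when `B = S² ε⁻²`.
-/

lemma Real.sqrt_div_mul_eq_sqrt_mul {r : ℝ} (hr : 0 ≤ r) (c : ℝ) :
    √(r / c) * c = √(r * c) := by
  rw [Real.sqrt_div hr, Real.sqrt_mul hr, div_mul_eq_mul_div, mul_div_assoc, Real.div_sqrt]

lemma Real.div_sqrt_div_eq_sqrt_mul {r : ℝ} (hr : 0 ≤ r) (c : ℝ) :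
    r / √(r / c) = √(r * c) := by
  rw [Real.sqrt_div hr, div_div_eq_mul_div, mul_div_right_comm, Real.div_sqrt, Real.sqrt_mul hr]

section OptimalAllocation

variable {ι : Type*} (s : Finset ι) (R C : ι → ℝ) (B : ℝ)

noncomputable def optimalAllocation (l : ι) : ℝ :=
  B / (∑ j ∈ s, √(R j * C j)) * √(R l / C l)

variable {s R C}

theorem sum_optimalAllocation_mul_cost (hR : ∀ l ∈ s, 0 ≤ R l)
    (hS : ∑ j ∈ s, √(R j * C j) ≠ 0) :
    ∑ l ∈ s, optimalAllocation s R C B l * C l = B := by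
  calc ∑ l ∈ s, optimalAllocation s R C B l * C l
      = ∑ l ∈ s, B / (∑ j ∈ s, √(R j * C j)) * √(R l * C l) :=
        sum_congr rfl fun l hl => by
          rw [optimalAllocation, mul_assoc, Real.sqrt_div_mul_eq_sqrt_mul (hR l hl)]
    _ = B := by rw [← mul_sum, div_mul_cancel₀ B hS]

theorem sum_div_optimalAllocation (hR : ∀ l ∈ s, 0 ≤ R l) :
    ∑ l ∈ s, R l / optimalAllocation s R C B l = (∑ j ∈ s, √(R j * C j)) ^ 2 / B := by
  calc ∑ l ∈ s, R l / optimalAllocation s R C B l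
      = ∑ l ∈ s, (∑ j ∈ s, √(R j * C j)) / B * √(R l * C l) :=
        sum_congr rfl fun l hl => by
          rw [optimalAllocation, div_mul_eq_div_div_swap, Real.div_sqrt_div_eq_sqrt_mul (hR l hl),
            div_div_eq_mul_div, div_mul_eq_mul_div, mul_comm]
    _ = (∑ j ∈ s, √(R j * C j)) ^ 2 / B := by rw [← mul_sum, div_mul_eq_mul_div, sq]

end OptimalAllocation

theorem stmt_18_general
    (L : ℕ) (hL : 1 ≤ L)
    (R C : ℕ → ℝ)
    (hR : ∀ l ∈ Finset.Icc 1 L, 0 < R l)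
    (hC : ∀ l ∈ Finset.Icc 1 L, 0 < C l)
    (ε : ℝ)
    (B : ℝ)
    (hB : B = (∑ l ∈ Finset.Icc 1 L, Real.sqrt (R l * C l)) ^ 2 * ε⁻¹ ^ 2)
    (Nstar : ℕ → ℝ)
    (hNstar : ∀ l ∈ Finset.Icc 1 L,
      Nstar l = B / (∑ j ∈ Finset.Icc 1 L, Real.sqrt (C j * R j)) * Real.sqrt (R l / C l)) :
    (∑ l ∈ Finset.Icc 1 L, Nstar l * C l = B) ∧
    (∑ l ∈ Finset.Icc 1 L, R l / Nstar l = ε ^ 2) := by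
  have hN : ∀ l ∈ Icc 1 L, Nstar l = optimalAllocation (Icc 1 L) R C B l := fun l hl => by
    simp only [hNstar l hl, optimalAllocation, mul_comm (C _) (R _)]
  have hR₀ : ∀ l ∈ Icc 1 L, 0 ≤ R l := fun l hl => (hR l hl).le
  have hS : ∑ j ∈ Icc 1 L, √(R j * C j) ≠ 0 :=
    (sum_pos (fun l hl => Real.sqrt_pos.2 (mul_pos (hR l hl) (hC l hl)))
      (nonempty_Icc.2 hL)).ne'
  rw [sum_congr rfl fun l hl => congrArg (· * C l) (hN l hl),
    sum_congr rfl fun l hl => congrArg (R l / ·) (hN l hl)]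
  refine ⟨sum_optimalAllocation_mul_cost B hR₀ hS, ?_⟩
  rw [sum_div_optimalAllocation B hR₀, hB, div_mul_cancel_left₀ (pow_ne_zero 2 hS), inv_pow,
    inv_inv]

/-- O(ε⁻²) sample complexity: for every `ε > 0`, set
`B(ε) = (Σ_{l=1}^{L} √(R_l C_l))² · ε⁻²` and let
`N_l*(ε) = (B(ε) / Σ_{j=1}^{L} √(C_j R_j)) · √(R_l / C_l)` be the optimal allocation for
budget `B(ε)`.  Then `Σ_{l=1}^{L} N_l*(ε) C_l = B(ε)` and `Σ_{l=1}^{L} R_l / N_l*(ε) = ε²`;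
in particular, the computational budget needed to achieve estimator variance `ε²` under
optimal allocation is proportional to `ε⁻²`. -/
theorem stmt_18
    (L : ℕ) (hL : 1 ≤ L)
    (R C : ℕ → ℝ)
    (hR : ∀ l ∈ Finset.Icc 1 L, 0 < R l)
    (hC : ∀ l ∈ Finset.Icc 1 L, 0 < C l)
    (ε : ℝ) (hε : 0 < ε)
    (B : ℝ)
    (hB : B = (∑ l ∈ Finset.Icc 1 L, Real.sqrt (R l * C l)) ^ 2 * ε⁻¹ ^ 2)
    (Nstar : ℕ → ℝ)
    (hNstar : ∀ l ∈ Finset.Icc 1 L,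
      Nstar l = B / (∑ j ∈ Finset.Icc 1 L, Real.sqrt (C j * R j)) * Real.sqrt (R l / C l)) :
    (∑ l ∈ Finset.Icc 1 L, Nstar l * C l = B) ∧
    (∑ l ∈ Finset.Icc 1 L, R l / Nstar l = ε ^ 2) :=
  stmt_18_general L hL R C hR hC ε B hB Nstar hNstar
end
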